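/- arXiv:2301.07730 — 2 statements merged into one kernel-verified Lean document; each statement's English description precedes it below -/
import Mathlib

section
/- There exists a constant C > 0 such that for every real κ with 0 < κ ≤ 1/2 there exist a natural number d with d ≤ C·log(1/κ)/κ² and a real polynomial P of degree at most d such that |√((x+1)/2) − P(x)| ≤ κ for every x ∈ [−1, 1]. -/
/-!
The truncated binomial series `q_d(t) = ∑_{k ≤ d} (-1)ᵏ (1/2 choose k) tᵏ` of `√(1 - t)` satisfies
`(1 - t) q_d' + q_d / 2 = (M_d / 2) tᵈ` with `M_d = q_d(1)`, because the full series solves the same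
equation with right-hand side `0`. Hence `(q_d - c) / √(1 - t)` has derivative of the sign of
`M_d tᵈ - c`: it increases for `c = 0` and decreases for `c = M_d`, giving
`√(1 - t) ≤ q_d(t) ≤ √(1 - t) + M_d` on `[0, 1]`. Here `M_d = (2d choose d) / 4ᵈ`, so `M_d² ≤ 1 / (d + 1)`,
and `d = ⌊κ⁻²⌋` already achieves error `κ` after substituting `t = (1 - x) / 2`.
-/

open scoped Matrix Kronecker ComplexOrder

/-- The positive semidefinite square root (as defined in Mathlib of December 2024). -/
noncomputable def Matrix.PosSemidef.sqrt {n 𝕜 : Type*} [Fintype n] [DecidableEq n] [RCLike 𝕜]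
    {A : Matrix n n 𝕜} (hA : A.PosSemidef) : Matrix n n 𝕜 :=
  (hA.1.eigenvectorUnitary : Matrix n n 𝕜) *
    Matrix.diagonal ((↑) ∘ (fun x : ℝ => Real.sqrt x) ∘ hA.1.eigenvalues) *
    (star (hA.1.eigenvectorUnitary : Matrix n n 𝕜))

/-- The operator (spectral) norm of a square complex matrix. -/
noncomputable def opNorm {n : Type*} [Fintype n] [DecidableEq n] (A : Matrix n n ℂ) : ℝ :=
  ‖Matrix.toEuclideanCLM (𝕜 := ℂ) A‖

/-- The trace norm `‖A‖₁ = Tr √(Aᴴ A)` of a square complex matrix. -/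
noncomputable def traceNorm {n : Type*} [Fintype n] [DecidableEq n] (A : Matrix n n ℂ) : ℝ :=
  ((Matrix.posSemidef_conjTranspose_mul_self A).sqrt.trace).re

/-- The (square-root) fidelity `F(ρ,σ) = ‖√ρ √σ‖₁` of positive semidefinite matrices. -/
noncomputable def fidelity {n : Type*} [Fintype n] [DecidableEq n] {ρ σ : Matrix n n ℂ}
    (hρ : ρ.PosSemidef) (hσ : σ.PosSemidef) : ℝ :=
  traceNorm (hρ.sqrt * hσ.sqrt)

/-- Functional calculus for a Hermitian matrix: `f(A) = Σ_i f(λ_i) |v_i⟩⟨v_i|`. -/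
noncomputable def matFun {n : Type*} [Fintype n] [DecidableEq n] {A : Matrix n n ℂ}
    (hA : A.IsHermitian) (f : ℝ → ℝ) : Matrix n n ℂ :=
  (hA.eigenvectorUnitary : Matrix n n ℂ) *
    Matrix.diagonal (fun i => (f (hA.eigenvalues i) : ℂ)) *
    (star (hA.eigenvectorUnitary : Matrix n n ℂ))

/-- Partial trace over the first tensor factor. -/
noncomputable def ptraceA {a b : Type*} [Fintype a] (X : Matrix (a × b) (a × b) ℂ) :
    Matrix b b ℂ :=
  Matrix.of fun i j => ∑ k, X (k, i) (k, j)

/-- Partial trace over the second tensor factor. -/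
noncomputable def ptraceB {a b : Type*} [Fintype b] (X : Matrix (a × b) (a × b) ℂ) :
    Matrix a a ℂ :=
  Matrix.of fun i j => ∑ k, X (i, k) (j, k)

/-- The outer product `|ψ⟩⟨φ|`. -/
def outer {a : Type*} (ψ φ : a → ℂ) : Matrix a a ℂ :=
  Matrix.of fun i j => ψ i * (starRingEnd ℂ) (φ j)

/-- The Euclidean norm of a finitely supported complex vector. -/
noncomputable def evnorm {a : Type*} [Fintype a] (v : a → ℂ) : ℝ :=
  Real.sqrt (∑ i, ‖v i‖ ^ 2)

open Polynomial Set

noncomputable def sqrtCoeff : ℕ → ℝ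
  | 0 => 1
  | k + 1 => sqrtCoeff k * (k - 1 / 2) / (k + 1)

noncomputable def sqrtTaylor (d : ℕ) : ℝ[X] :=
  ∑ k ∈ Finset.range (d + 1), C (sqrtCoeff k) * X ^ k

lemma sqrtCoeff_succ_mul (k : ℕ) :
    ((k : ℝ) + 1) * sqrtCoeff (k + 1) = ((k : ℝ) - 1 / 2) * sqrtCoeff k := by
  rw [sqrtCoeff]
  field_simp

lemma sqrtTaylor_succ (d : ℕ) :
    sqrtTaylor (d + 1) = sqrtTaylor d + C (sqrtCoeff (d + 1)) * X ^ (d + 1) :=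
  Finset.sum_range_succ _ _

lemma degree_sqrtTaylor_le (d : ℕ) : (sqrtTaylor d).degree ≤ d :=
  (degree_sum_le _ _).trans <| Finset.sup_le fun k hk =>
    (degree_C_mul_X_pow_le k _).trans <| by
      exact_mod_cast Nat.lt_succ_iff.mp (Finset.mem_range.mp hk)

lemma sqrtTaylor_eval_zero (d : ℕ) : (sqrtTaylor d).eval 0 = 1 := by
  induction d with
  | zero => simp [sqrtTaylor, sqrtCoeff]
  | succ d ih => simp [sqrtTaylor_succ, ih]

lemma sqrtTaylor_ode_sqrtCoeff (d : ℕ) (t : ℝ) :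
    (1 - t) * (derivative (sqrtTaylor d)).eval t + (sqrtTaylor d).eval t / 2
      = -((d + 1) * sqrtCoeff (d + 1)) * t ^ d := by
  induction d with
  | zero =>
    have h := sqrtCoeff_succ_mul 0
    simp [sqrtTaylor, sqrtCoeff] at h ⊢
  | succ d ih =>
    have h := sqrtCoeff_succ_mul (d + 1)
    push_cast at h
    simp only [sqrtTaylor_succ, derivative_add, derivative_C_mul, derivative_X_pow, eval_add,
      eval_mul, eval_C, eval_pow, eval_X]
    push_cast
    linear_combination ih + t ^ (d + 1) * h

lemma sqrtTaylor_eval_one (d : ℕ) :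
    (sqrtTaylor d).eval 1 = -(2 * (d + 1) * sqrtCoeff (d + 1)) := by
  have := sqrtTaylor_ode_sqrtCoeff d 1
  rw [sub_self, zero_mul, zero_add, one_pow] at this
  linarith

lemma sqrtTaylor_ode (d : ℕ) (t : ℝ) :
    (1 - t) * (derivative (sqrtTaylor d)).eval t + (sqrtTaylor d).eval t / 2
      = (sqrtTaylor d).eval 1 / 2 * t ^ d := by
  rw [sqrtTaylor_ode_sqrtCoeff, sqrtTaylor_eval_one]
  ring

lemma sqrtTaylor_succ_eval_one (d : ℕ) :
    (sqrtTaylor (d + 1)).eval 1 = (sqrtTaylor d).eval 1 * ((2 * d + 1) / (2 * d + 2)) := by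
  have h := sqrtCoeff_succ_mul (d + 1)
  push_cast at h
  rw [sqrtTaylor_eval_one, sqrtTaylor_eval_one]
  field_simp
  push_cast
  linear_combination (-2) * h

lemma sqrtTaylor_eval_one_nonneg (d : ℕ) : 0 ≤ (sqrtTaylor d).eval 1 := by
  induction d with
  | zero => simp [sqrtTaylor, sqrtCoeff]
  | succ d ih => rw [sqrtTaylor_succ_eval_one]; positivity

lemma sq_sqrtTaylor_eval_one_le (d : ℕ) : (sqrtTaylor d).eval 1 ^ 2 ≤ 1 / (d + 1) := by
  induction d with
  | zero => simp [sqrtTaylor, sqrtCoeff]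
  | succ d ih =>
    rw [sqrtTaylor_succ_eval_one, mul_pow]
    calc _ ≤ 1 / ((d : ℝ) + 1) * ((2 * d + 1) / (2 * d + 2)) ^ 2 := by gcongr
      _ ≤ 1 / ((d + 1 : ℕ) + 1) := by
        rw [div_pow, one_div_mul_eq_div, div_div, div_le_div_iff₀ (by positivity) (by positivity)]
        push_cast
        nlinarith

lemma hasDerivAt_sqrtTaylor_sub_div_sqrt (d : ℕ) (c : ℝ) {t : ℝ} (ht : t < 1) :
    HasDerivAt (fun s => ((sqrtTaylor d).eval s - c) / √(1 - s))
      (((sqrtTaylor d).eval 1 * t ^ d - c) / (2 * (1 - t) * √(1 - t))) t := by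
  have hpos : 0 < 1 - t := sub_pos.mpr ht
  have hsqrt : 0 < √(1 - t) := Real.sqrt_pos.mpr hpos
  have hnum := ((sqrtTaylor d).hasDerivAt t).sub_const c
  have hden : HasDerivAt (fun s => √(1 - s)) (-1 / (2 * √(1 - t))) t :=
    ((hasDerivAt_id t).const_sub 1).sqrt hpos.ne'
  refine (hnum.div hden hsqrt.ne').congr_deriv ?_
  rw [Real.sq_sqrt hpos.le]
  field_simp
  linear_combination 2 * (eval t (derivative (sqrtTaylor d))) * Real.sq_sqrt hpos.le
    + 2 * sqrtTaylor_ode d t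

lemma sqrt_one_sub_le_sqrtTaylor_eval (d : ℕ) {t : ℝ} (ht0 : 0 ≤ t) (ht1 : t ≤ 1) :
    √(1 - t) ≤ (sqrtTaylor d).eval t := by
  have hM := sqrtTaylor_eval_one_nonneg d
  rcases ht1.eq_or_lt with rfl | ht1
  · simpa using hM
  have hmono : MonotoneOn (fun s => ((sqrtTaylor d).eval s - 0) / √(1 - s)) (Ico 0 1) := by
    refine monotoneOn_of_hasDerivWithinAt_nonneg (convex_Ico 0 1)
      (fun s hs => (hasDerivAt_sqrtTaylor_sub_div_sqrt d 0 hs.2).continuousAt.continuousWithinAt)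
      (fun s hs => (hasDerivAt_sqrtTaylor_sub_div_sqrt d 0 (interior_subset hs).2).hasDerivWithinAt)
      (fun s hs => ?_)
    rw [interior_Ico] at hs
    have : 0 < 1 - s := sub_pos.mpr hs.2
    have := hs.1.le
    rw [sub_zero]
    positivity
  have h := hmono ⟨le_rfl, zero_lt_one⟩ ⟨ht0, ht1⟩ ht0
  dsimp only at h
  rwa [sqrtTaylor_eval_zero, sub_zero, sub_zero, Real.sqrt_one, div_one,
    one_le_div₀ (Real.sqrt_pos.mpr (sub_pos.mpr ht1))] at h

lemma sqrtTaylor_eval_le (d : ℕ) {t : ℝ} (ht0 : 0 ≤ t) (ht1 : t ≤ 1) :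
    (sqrtTaylor d).eval t ≤ √(1 - t) + (sqrtTaylor d).eval 1 := by
  have hM := sqrtTaylor_eval_one_nonneg d
  rcases ht1.eq_or_lt with rfl | ht1
  · simp
  have hanti : AntitoneOn (fun s => ((sqrtTaylor d).eval s - (sqrtTaylor d).eval 1) / √(1 - s))
      (Ico 0 1) := by
    refine antitoneOn_of_hasDerivWithinAt_nonpos (convex_Ico 0 1)
      (fun s hs => (hasDerivAt_sqrtTaylor_sub_div_sqrt d _ hs.2).continuousAt.continuousWithinAt)
      (fun s hs => (hasDerivAt_sqrtTaylor_sub_div_sqrt d _ (interior_subset hs).2).hasDerivWithinAt)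
      (fun s hs => ?_)
    rw [interior_Ico] at hs
    have : 0 < 1 - s := sub_pos.mpr hs.2
    have : s ^ d ≤ 1 := pow_le_one₀ hs.1.le hs.2.le
    refine div_nonpos_of_nonpos_of_nonneg ?_ (by positivity)
    nlinarith
  have h := hanti ⟨le_rfl, zero_lt_one⟩ ⟨ht0, ht1⟩ ht0
  dsimp only at h
  rw [sqrtTaylor_eval_zero, sub_zero, Real.sqrt_one, div_one,
    div_le_iff₀ (Real.sqrt_pos.mpr (sub_pos.mpr ht1))] at h
  nlinarith [Real.sqrt_nonneg (1 - t)]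

lemma exists_degree_le_abs_sqrt_sub_eval_le (d : ℕ) :
    ∃ P : ℝ[X], P.degree ≤ d ∧ ∀ x : ℝ, -1 ≤ x → x ≤ 1 →
      |√((x + 1) / 2) - P.eval x| ≤ (sqrtTaylor d).eval 1 := by
  refine ⟨(sqrtTaylor d).comp (C (-1 / 2) * X + C (1 / 2)), ?_, fun x hx1 hx2 => ?_⟩
  · refine degree_le_of_natDegree_le (natDegree_comp_le.trans ?_)
    exact (Nat.mul_le_mul (natDegree_le_iff_degree_le.mpr (degree_sqrtTaylor_le d))
      natDegree_linear_le).trans_eq (mul_one d)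
  · have ht : (x + 1) / 2 = 1 - (1 - x) / 2 := by ring
    have hP : ((sqrtTaylor d).comp (C (-1 / 2) * X + C (1 / 2))).eval x
        = (sqrtTaylor d).eval ((1 - x) / 2) := by
      simp only [eval_comp, eval_add, eval_mul, eval_C, eval_X]
      ring_nf
    rw [ht, hP, abs_sub_le_iff]
    constructor
    · linarith [sqrt_one_sub_le_sqrtTaylor_eval d (t := (1 - x) / 2) (by linarith) (by linarith),
        sqrtTaylor_eval_one_nonneg d]
    · linarith [sqrtTaylor_eval_le d (t := (1 - x) / 2) (by linarith) (by linarith)]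

/-- There exists `C > 0` such that for every `0 < κ ≤ 1/2` there exist `d ≤ C·log(1/κ)/κ²`
and a real polynomial `P` of degree at most `d` with `|√((x+1)/2) − P(x)| ≤ κ` on `[−1,1]`. -/
theorem sqrt_poly_approx :
    ∃ C : ℝ, 0 < C ∧ ∀ κ : ℝ, 0 < κ → κ ≤ 1 / 2 →
      ∃ d : ℕ, (d : ℝ) ≤ C * Real.log (1 / κ) / κ ^ 2 ∧
        ∃ P : Polynomial ℝ, P.degree ≤ (d : ℕ) ∧
          ∀ x : ℝ, -1 ≤ x → x ≤ 1 → |Real.sqrt ((x + 1) / 2) - P.eval x| ≤ κ := by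
  refine ⟨2, two_pos, fun κ hκ hκ2 => ⟨⌊1 / κ ^ 2⌋₊, ?_, ?_⟩⟩
  · have hlog : 1 ≤ 2 * Real.log (1 / κ) := by
      have := Real.log_two_gt_d9
      have : Real.log 2 ≤ Real.log (1 / κ) :=
        Real.log_le_log two_pos (by rw [le_div_iff₀ hκ]; linarith)
      linarith
    calc (⌊1 / κ ^ 2⌋₊ : ℝ) ≤ 1 / κ ^ 2 := Nat.floor_le (by positivity)
      _ ≤ 2 * Real.log (1 / κ) / κ ^ 2 := by gcongr
  · obtain ⟨P, hdeg, hP⟩ := exists_degree_le_abs_sqrt_sub_eval_le ⌊1 / κ ^ 2⌋₊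
    refine ⟨P, hdeg, fun x hx1 hx2 => (hP x hx1 hx2).trans ?_⟩
    have hsq := sq_sqrtTaylor_eval_one_le ⌊1 / κ ^ 2⌋₊
    have hfloor : 1 / κ ^ 2 < ⌊1 / κ ^ 2⌋₊ + 1 := Nat.lt_floor_add_one _
    refine (pow_le_pow_iff_left₀ (sqrtTaylor_eval_one_nonneg _) hκ.le two_ne_zero).mp ?_
    exact hsq.trans ((one_div_le (by positivity) (by positivity)).mpr hfloor.le)
end

section
/- Let D ≥ 1 be a natural number, C ≥ 1 a real number, δ ∈ (0, 1], and set κ = δ/(6·D·C). Let P be an odd real polynomial such that |P(x)| ≤ 2 for every x ∈ [−1,1] and |P(x) − sgn(x)| ≤ κ for every x ∈ [−1,1] with |x| ≥ κ. Then for every Hermitian D×D complex matrix A with ‖A‖∞ ≤ C: (i) ‖P(A/C)‖∞ ≤ 2, and (ii) |Tr(P(A/C)·A) − ‖A‖₁| ≤ δ. -/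
open scoped Matrix Kronecker ComplexOrder

/-!
Diagonalising `A` with eigenvalues `λᵢ`, one has `Tr (P(A/C) A) = ∑ P(λᵢ/C) λᵢ` and
`‖A‖₁ = ∑ |λᵢ|`.
With `x = λᵢ/C ∈ [-1, 1]` the `i`-th difference is `C x (P x - sgn x)`, of size at most `C κ`
when `|x| ≥ κ` and at most `3 C κ` when `|x| < κ` (there `|P x - sgn x| ≤ 3`). Summing the
`D` terms gives `3 D C κ = δ / 2`.
-/

open scoped Matrix.Norms.L2Operator MatrixOrder

theorem Real.self_mul_sign (x : ℝ) : x * Real.sign x = |x| := by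
  rcases lt_trichotomy x 0 with h | rfl | h
  · rw [Real.sign_of_neg h, abs_of_neg h, mul_neg_one]
  · simp
  · rw [Real.sign_of_pos h, abs_of_pos h, mul_one]

theorem Real.abs_sign_le_one (x : ℝ) : |Real.sign x| ≤ 1 := by
  rcases Real.sign_apply_eq x with h | h | h <;> simp [h]

theorem abs_mul_sub_abs_le_of_approx_sign {p : ℝ → ℝ} {κ x : ℝ}
    (hbound : ∀ x : ℝ, -1 ≤ x → x ≤ 1 → |p x| ≤ 2)
    (happrox : ∀ x : ℝ, -1 ≤ x → x ≤ 1 → κ ≤ |x| → |p x - Real.sign x| ≤ κ)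
    (hx : |x| ≤ 1) : |p x * x - (|x|)| ≤ 3 * κ := by
  obtain ⟨hx₁, hx₂⟩ := abs_le.1 hx
  have hfactor : p x * x - |x| = x * (p x - Real.sign x) := by
    rw [← Real.self_mul_sign]; ring
  rw [hfactor, abs_mul]
  rcases le_or_gt κ |x| with hκ | hκ
  · have happ := happrox x hx₁ hx₂ hκ
    nlinarith [abs_nonneg x, abs_nonneg (p x - Real.sign x)]
  · have herr : |p x - Real.sign x| ≤ 3 := by
      linarith [abs_sub (p x) (Real.sign x), hbound x hx₁ hx₂, Real.abs_sign_le_one x]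
    nlinarith [abs_nonneg x, abs_nonneg (p x - Real.sign x)]

section HermitianFunctionalCalculus

variable {n : Type*} [Fintype n] [DecidableEq n]

theorem matFun_eq_cfc {A : Matrix n n ℂ} (hA : A.IsHermitian) (f : ℝ → ℝ) :
    matFun hA f = cfc f A := by
  rw [hA.cfc_eq]; rfl

theorem Matrix.IsHermitian.abs_le_opNorm_of_mem_spectrum {A : Matrix n n ℂ} (hA : A.IsHermitian)
    {x : ℝ} (hx : x ∈ spectrum ℝ A) : |x| ≤ opNorm A := by
  have h := norm_apply_le_norm_cfc (fun x : ℝ => x) A hx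
  rwa [cfc_id' ℝ A, Real.norm_eq_abs] at h

theorem Matrix.PosSemidef.sqrt_eq_cfcSqrt {B : Matrix n n ℂ} (hB : B.PosSemidef) :
    hB.sqrt = CFC.sqrt B := by
  rw [CFC.sqrt_eq_real_sqrt B hB.nonneg, cfcₙ_eq_cfc (hf0 := Real.sqrt_zero), hB.1.cfc_eq]
  rfl

theorem Matrix.IsHermitian.traceNorm_eq_re_trace_cfc_abs {A : Matrix n n ℂ}
    (hA : A.IsHermitian) :
    traceNorm A = (cfc (fun x : ℝ => |x|) A).trace.re := by
  rw [traceNorm, Matrix.PosSemidef.sqrt_eq_cfcSqrt, ← Matrix.star_eq_conjTranspose, ← CFC.abs,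
    CFC.abs_eq_cfc_norm A]
  rfl

theorem Matrix.IsHermitian.trace_cfc {𝕜 : Type*} [RCLike 𝕜] {A : Matrix n n 𝕜}
    (hA : A.IsHermitian) (f : ℝ → ℝ) :
    (cfc f A).trace = ∑ i, (f (hA.eigenvalues i) : 𝕜) := by
  rw [hA.cfc_eq, Matrix.IsHermitian.cfc, Unitary.conjStarAlgAut_apply, Matrix.trace_mul_cycle,
    Unitary.coe_star_mul_self, one_mul, Matrix.trace_diagonal]
  rfl

theorem Matrix.IsHermitian.cfc_mul_self {𝕜 : Type*} [RCLike 𝕜] {A : Matrix n n 𝕜}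
    (hA : A.IsHermitian) (f : ℝ → ℝ) :
    cfc f A * A = cfc (fun x => f x * x) A := by
  rw [cfc_mul f (fun x => x) A (A.finite_real_spectrum.continuousOn f), cfc_id' ℝ A]

theorem Matrix.IsHermitian.abs_re_trace_cfc_mul_sub_traceNorm_le {A : Matrix n n ℂ}
    (hA : A.IsHermitian) (f : ℝ → ℝ) {ε : ℝ}
    (h : ∀ x ∈ spectrum ℝ A, |f x * x - (|x|)| ≤ ε) :
    |(cfc f A * A).trace.re - traceNorm A| ≤ Fintype.card n * ε := by
  simp only [hA.cfc_mul_self, hA.traceNorm_eq_re_trace_cfc_abs, hA.trace_cfc, Complex.re_sum,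
    ← Finset.sum_sub_distrib]
  calc |∑ i, (f (hA.eigenvalues i) * hA.eigenvalues i - |hA.eigenvalues i|)|
      ≤ ∑ i, |f (hA.eigenvalues i) * hA.eigenvalues i - (|hA.eigenvalues i|)| :=
        Finset.abs_sum_le_sum_abs _ _
    _ ≤ Fintype.card n * ε := by
        simpa using Finset.sum_le_card_nsmul Finset.univ _ ε
          fun i _ => h _ (hA.eigenvalues_mem_spectrum_real i)

end HermitianFunctionalCalculus

theorem sign_poly_trace_distance_oracle_general (D : ℕ) (hD : 1 ≤ D)
    (C : ℝ) (hC : 1 ≤ C) (δ : ℝ) (hδ0 : 0 < δ)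
    (P : Polynomial ℝ)
    (hbound : ∀ x : ℝ, -1 ≤ x → x ≤ 1 → |P.eval x| ≤ 2)
    (happrox : ∀ x : ℝ, -1 ≤ x → x ≤ 1 → δ / (6 * D * C) ≤ |x| →
      |P.eval x - Real.sign x| ≤ δ / (6 * D * C))
    (A : Matrix (Fin D) (Fin D) ℂ) (hA : A.IsHermitian) (hAnorm : opNorm A ≤ C) :
    opNorm (matFun hA (fun x => P.eval (x / C))) ≤ 2 ∧
      |((matFun hA (fun x => P.eval (x / C)) * A).trace).re - traceNorm A| ≤ δ := by
  have hCpos : 0 < C := by linarith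
  have hDne : (D : ℝ) ≠ 0 := by positivity
  have hscaled : ∀ x ∈ spectrum ℝ A, |x / C| ≤ 1 := fun x hx => by
    rw [abs_div, abs_of_pos hCpos, div_le_one hCpos]
    exact (hA.abs_le_opNorm_of_mem_spectrum hx).trans hAnorm
  rw [matFun_eq_cfc]
  refine ⟨norm_cfc_le (a := A) (f := fun x => P.eval (x / C)) zero_le_two fun x hx => ?_, ?_⟩
  · obtain ⟨hx₁, hx₂⟩ := abs_le.1 (hscaled x hx)
    exact hbound _ hx₁ hx₂
  calc _ ≤ Fintype.card (Fin D) * (C * (3 * (δ / (6 * D * C)))) :=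
        hA.abs_re_trace_cfc_mul_sub_traceNorm_le _ fun x hx => ?_
    _ = δ / 2 := by rw [Fintype.card_fin]; field_simp; ring
    _ ≤ δ := by linarith
  have hrescale : P.eval (x / C) * x - |x| = C * (P.eval (x / C) * (x / C) - |x / C|) := by
    rw [abs_div, abs_of_pos hCpos]; field_simp
  rw [hrescale, abs_mul, abs_of_pos hCpos]
  gcongr
  exact abs_mul_sub_abs_le_of_approx_sign hbound happrox (hscaled x hx)

/-- An odd polynomial `P` that is bounded by `2` on `[−1,1]` and `κ`-approximates the sign
function away from `[−κ,κ]` (with `κ = δ/(6DC)`) gives a good trace-distance oracle: for every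
Hermitian `A` with `‖A‖∞ ≤ C`, `‖P(A/C)‖∞ ≤ 2` and `|Tr(P(A/C)·A) − ‖A‖₁| ≤ δ`. -/
theorem sign_poly_trace_distance_oracle (D : ℕ) (hD : 1 ≤ D)
    (C : ℝ) (hC : 1 ≤ C) (δ : ℝ) (hδ0 : 0 < δ) (hδ1 : δ ≤ 1)
    (P : Polynomial ℝ)
    (hodd : ∀ x : ℝ, P.eval (-x) = -P.eval x)
    (hbound : ∀ x : ℝ, -1 ≤ x → x ≤ 1 → |P.eval x| ≤ 2)
    (happrox : ∀ x : ℝ, -1 ≤ x → x ≤ 1 → δ / (6 * D * C) ≤ |x| →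
      |P.eval x - Real.sign x| ≤ δ / (6 * D * C))
    (A : Matrix (Fin D) (Fin D) ℂ) (hA : A.IsHermitian) (hAnorm : opNorm A ≤ C) :
    opNorm (matFun hA (fun x => P.eval (x / C))) ≤ 2 ∧
      |((matFun hA (fun x => P.eval (x / C)) * A).trace).re - traceNorm A| ≤ δ :=
  sign_poly_trace_distance_oracle_general D hD C hC δ hδ0 P hbound happrox A hA hAnorm
end
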